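/- arXiv:2409.18711 — 6 statements merged into one kernel-verified Lean document; each statement's English description precedes it below -/
import Mathlib

section
/- Let (A, B, C, i^*, i_*, i^!, j_!, j^*, j_*) be a recollement of triangulated categories and let V be a thick subcategory of B such that i_*A ∈ V for every object A of A. Then j^*V, the full subcategory of C consisting of objects isomorphic to j^*V for some V ∈ V, is a thick subcategory of C. -/
open CategoryTheory Limits Pretriangulated

namespace Paper

section Defs

variable (B : Type*) [Category B] [HasZeroObject B] [Preadditive B] [HasShift B ℤ]
  [∀ n : ℤ, (shiftFunctor B n).Additive] [Pretriangulated B]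

/-- A thick subcategory of a triangulated category: a full (iso-closed) subcategory,
closed under shifts in both directions, under cones of morphisms, and under
direct summands. -/
structure IsThick (S : Set B) : Prop where
  mem_of_iso : ∀ {X Y : B}, (X ≅ Y) → X ∈ S → Y ∈ S
  shift_mem : ∀ (X : B) (n : ℤ), X ∈ S → X⟦n⟧ ∈ S
  mem_of_dist : ∀ T : Triangle B, (T ∈ distTriang B) → T.obj₁ ∈ S → T.obj₂ ∈ S → T.obj₃ ∈ S
  mem_of_retract : ∀ (X Y : B) (s : X ⟶ Y) (r : Y ⟶ X), s ≫ r = 𝟙 X → Y ∈ S → X ∈ S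

/-- `X^∧_{n-1}`: here `hatAux X 0 = X^∧_{-1}` consists of the zero objects, and
`hatAux X (n+1) = X^∧_n` consists of the objects `Z` admitting a distinguished triangle
`D → D' → Z → ΣD` with `D ∈ X^∧_{n-1}` and `D' ∈ X`. -/
def hatAux (X : Set B) : ℕ → Set B
  | 0 => {Z | IsZero Z}
  | n + 1 => {Z | ∃ T : Triangle B, (T ∈ distTriang B) ∧ T.obj₁ ∈ hatAux X n ∧
      T.obj₂ ∈ X ∧ Nonempty (T.obj₃ ≅ Z)}

/-- `X^∧ = ∪_{n ≥ 0} X^∧_n`. -/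
def hatSet (X : Set B) : Set B := ⋃ n : ℕ, hatAux B X (n + 1)

/-- `X^∨_{n-1}`: here `veeAux X 0 = X^∨_{-1}` consists of the zero objects, and
`veeAux X (n+1) = X^∨_n` consists of the objects `Z` admitting a distinguished triangle
`Z → D → D' → ΣZ` with `D ∈ X` and `D' ∈ X^∨_{n-1}`. -/
def veeAux (X : Set B) : ℕ → Set B
  | 0 => {Z | IsZero Z}
  | n + 1 => {Z | ∃ T : Triangle B, (T ∈ distTriang B) ∧ Nonempty (T.obj₁ ≅ Z) ∧
      T.obj₂ ∈ X ∧ T.obj₃ ∈ veeAux X n}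

/-- `X^∨ = ∪_{n ≥ 0} X^∨_n`. -/
def veeSet (X : Set B) : Set B := ⋃ n : ℕ, veeAux B X (n + 1)

/-- A silting subcategory: an iso-closed full subcategory `M` with `M = add M`
(additive and closed under direct summands), `Hom(X, Y⟦k⟧) = 0` for all `X, Y ∈ M` and
`k ≥ 1`, and whose smallest containing thick subcategory is the whole category. -/
structure IsSilting [HasBinaryBiproducts B] (M : Set B) : Prop where
  mem_of_iso : ∀ {X Y : B}, (X ≅ Y) → X ∈ M → Y ∈ M
  zero_mem : ∀ X : B, IsZero X → X ∈ M
  sum_mem : ∀ X Y : B, X ∈ M → Y ∈ M → (X ⊞ Y) ∈ M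
  mem_of_retract : ∀ (X Y : B) (s : X ⟶ Y) (r : Y ⟶ X), s ≫ r = 𝟙 X → Y ∈ M → X ∈ M
  orth : ∀ X ∈ M, ∀ Y ∈ M, ∀ k : ℤ, 1 ≤ k → ∀ f : X ⟶ Y⟦k⟧, f = 0
  thick_gen : ∀ X : B, ∀ S : Set B, IsThick B S → M ⊆ S → X ∈ S

/-- `add M`: the direct summands (retracts) of finite direct sums of copies of `M`. -/
def addSet [HasFiniteBiproducts B] (M : B) : Set B :=
  {X | ∃ (n : ℕ) (s : X ⟶ ⨁ fun (_ : Fin n) => M) (r : (⨁ fun (_ : Fin n) => M) ⟶ X),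
    s ≫ r = 𝟙 X}

/-- A bounded hereditary cotorsion pair `(T, F)` in a triangulated category. -/
structure IsBddHeredCotorsionPair (T F : Set B) : Prop where
  t_mem_of_iso : ∀ {X Y : B}, (X ≅ Y) → X ∈ T → Y ∈ T
  f_mem_of_iso : ∀ {X Y : B}, (X ≅ Y) → X ∈ F → Y ∈ F
  t_mem_of_retract : ∀ (X Y : B) (s : X ⟶ Y) (r : Y ⟶ X), s ≫ r = 𝟙 X → Y ∈ T → X ∈ T
  f_mem_of_retract : ∀ (X Y : B) (s : X ⟶ Y) (r : Y ⟶ X), s ≫ r = 𝟙 X → Y ∈ F → X ∈ F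
  orth : ∀ X ∈ T, ∀ Y ∈ F, ∀ k : ℤ, 1 ≤ k → ∀ f : X ⟶ Y⟦k⟧, f = 0
  tri₁ : ∀ X : B, ∃ (Fx Tx : B) (_ : Fx ∈ F) (_ : Tx ∈ T) (f : Fx ⟶ Tx) (g : Tx ⟶ X)
    (h : X ⟶ Fx⟦(1 : ℤ)⟧), Triangle.mk f g h ∈ distTriang B
  tri₂ : ∀ X : B, ∃ (Fx Tx : B) (_ : Fx ∈ F) (_ : Tx ∈ T) (f : X ⟶ Fx) (g : Fx ⟶ Tx)
    (h : Tx ⟶ X⟦(1 : ℤ)⟧), Triangle.mk f g h ∈ distTriang B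
  bounded_t : hatSet B T = Set.univ
  bounded_f : veeSet B F = Set.univ

end Defs

/-- The iso-closed image of a full subcategory under a functor. -/
def imgSet {X Y : Type*} [Category X] [Category Y] (F : X ⥤ Y) (S : Set X) : Set Y :=
  {y | ∃ x ∈ S, Nonempty (F.obj x ≅ y)}

section Recollement

variable {A : Type*} [Category A] [HasZeroObject A] [Preadditive A] [HasShift A ℤ]
  [∀ n : ℤ, (shiftFunctor A n).Additive] [Pretriangulated A]
variable {B : Type*} [Category B] [HasZeroObject B] [Preadditive B] [HasShift B ℤ]
  [∀ n : ℤ, (shiftFunctor B n).Additive] [Pretriangulated B]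
variable {C : Type*} [Category C] [HasZeroObject C] [Preadditive C] [HasShift C ℤ]
  [∀ n : ℤ, (shiftFunctor C n).Additive] [Pretriangulated C]

/-- A recollement of triangulated categories `(A, B, C)`, with functors
`i^* = i_star`, `i_* = i_lower`, `i^! = i_shriek`, `j_! = j_lower`, `j^* = j_star`,
`j_* = j_upper`, satisfying axioms (R1)-(R5). -/
structure Recollement (i_star : B ⥤ A) (i_lower : A ⥤ B) (i_shriek : B ⥤ A)
    (j_lower : C ⥤ B) (j_star : B ⥤ C) (j_upper : C ⥤ B) where
  adj₁ : i_star ⊣ i_lower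
  adj₂ : i_lower ⊣ i_shriek
  adj₃ : j_lower ⊣ j_star
  adj₄ : j_star ⊣ j_upper
  i_lower_full : i_lower.Full
  i_lower_faithful : i_lower.Faithful
  j_lower_full : j_lower.Full
  j_lower_faithful : j_lower.Faithful
  j_upper_full : j_upper.Full
  j_upper_faithful : j_upper.Faithful
  essImage_i_lower : ∀ X : B, i_lower.essImage X ↔ IsZero (j_star.obj X)
  r4 : ∀ X : B, ∃ γ : j_upper.obj (j_star.obj X) ⟶ (i_lower.obj (i_shriek.obj X))⟦(1 : ℤ)⟧,
    Triangle.mk (adj₂.counit.app X) (adj₄.unit.app X) γ ∈ distTriang B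
  r5 : ∀ X : B, ∃ γ : i_lower.obj (i_star.obj X) ⟶ (j_lower.obj (j_star.obj X))⟦(1 : ℤ)⟧,
    Triangle.mk (adj₃.counit.app X) (adj₁.unit.app X) γ ∈ distTriang B

/-- The glued subcategory `T = {B | i^*B ∈ T₁ and j^*B ∈ T₂}`. -/
def gluedT (i_star : B ⥤ A) (j_star : B ⥤ C) (T₁ : Set A) (T₂ : Set C) : Set B :=
  {X | i_star.obj X ∈ T₁ ∧ j_star.obj X ∈ T₂}

/-- The glued subcategory `F = {B | i^!B ∈ F₁ and j^*B ∈ F₂}`. -/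
def gluedF (i_shriek : B ⥤ A) (j_star : B ⥤ C) (F₁ : Set A) (F₂ : Set C) : Set B :=
  {X | i_shriek.obj X ∈ F₁ ∧ j_star.obj X ∈ F₂}

/-- The glued silting subcategory
`M_B = {B | i^*B ∈ M_A^∨, j^*B ∈ M_C^∨, i^!B ∈ M_A^∧, j^*B ∈ M_C^∧}`. -/
def gluedSilting (i_star i_shriek : B ⥤ A) (j_star : B ⥤ C)
    (M_A : Set A) (M_C : Set C) : Set B :=
  {X | i_star.obj X ∈ veeSet A M_A ∧ j_star.obj X ∈ veeSet C M_C ∧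
       i_shriek.obj X ∈ hatSet A M_A ∧ j_star.obj X ∈ hatSet C M_C}

variable (i_star : B ⥤ A) (i_lower : A ⥤ B) (i_shriek : B ⥤ A)
  (j_lower : C ⥤ B) (j_star : B ⥤ C) (j_upper : C ⥤ B)
  [Functor.CommShift i_star ℤ] [Functor.IsTriangulated i_star]
  [Functor.CommShift i_lower ℤ] [Functor.IsTriangulated i_lower]
  [Functor.CommShift i_shriek ℤ] [Functor.IsTriangulated i_shriek]
  [Functor.CommShift j_lower ℤ] [Functor.IsTriangulated j_lower]
  [Functor.CommShift j_star ℤ] [Functor.IsTriangulated j_star]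
  [Functor.CommShift j_upper ℤ] [Functor.IsTriangulated j_upper]

/-- Let `(A, B, C)` be a recollement of triangulated categories and `V` a thick
subcategory of `B` containing `i_* A` for every object `A` of `A`.  Then `j^* V`, the
full subcategory of `C` of objects isomorphic to `j^* V` for some `V ∈ V`, is a thick
subcategory of `C`. -/
theorem isThick_j_star_image
    (R : Recollement i_star i_lower i_shriek j_lower j_star j_upper)
    (V : Set B) (hV : IsThick B V) (hA : ∀ a : A, i_lower.obj a ∈ V) :
    IsThick C (imgSet j_star V) := by
  haveI := R.j_lower_full
  haveI := R.j_lower_faithful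
  -- thick subcategories are closed under taking the first object of a triangle
  have mem₁ : ∀ T : Triangle B, (T ∈ distTriang B) → T.obj₂ ∈ V → T.obj₃ ∈ V →
      T.obj₁ ∈ V := by
    intro T hT h2 h3
    have h := hV.mem_of_dist T.rotate (rot_of_distTriang T hT) h2 h3
    have h' := hV.shift_mem _ (-1 : ℤ) h
    exact hV.mem_of_iso (shiftShiftNeg T.obj₁ (1 : ℤ)) h'
  -- key: Z ∈ j^*V ↔ j_! Z ∈ V
  have key : ∀ Z : C, Z ∈ imgSet j_star V ↔ j_lower.obj Z ∈ V := by
    intro Z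
    constructor
    · rintro ⟨W, hW, ⟨e⟩⟩
      obtain ⟨γ, hγ⟩ := R.r5 W
      have h1 : j_lower.obj (j_star.obj W) ∈ V := mem₁ _ hγ hW (hA _)
      exact hV.mem_of_iso (j_lower.mapIso e) h1
    · intro h
      exact ⟨j_lower.obj Z, h, ⟨(asIso (R.adj₃.unit.app Z)).symm⟩⟩
  constructor
  · intro X Y e hX
    rw [key] at *
    exact hV.mem_of_iso (j_lower.mapIso e) hX
  · intro X n hX
    rw [key] at *
    exact hV.mem_of_iso ((j_lower.commShiftIso n).app X).symm (hV.shift_mem _ n hX)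
  · intro T hT h1 h2
    rw [key] at *
    exact hV.mem_of_dist _ (j_lower.map_distinguished T hT) h1 h2
  · intro X Y s r hsr hY
    rw [key] at *
    refine hV.mem_of_retract _ _ (j_lower.map s) (j_lower.map r) ?_ hY
    rw [← j_lower.map_comp, hsr, j_lower.map_id]

end Recollement

end Paper
end

section
/- Let (A, B, C, i^*, i_*, i^!, j_!, j^*, j_*) be a recollement of triangulated categories. The assignments Φ : V ↦ j^*V (the full subcategory of C of objects isomorphic to j^*V for some V ∈ V) and Ψ : W ↦ {M ∈ B : j^*M ∈ W} are mutually inverse bijections between the set of thick subcategories of B that contain i_*A (i.e. contain i_*A for every object A of A) and the set of thick subcategories of C; that is, Φ(Ψ(W)) = W for every thick subcategory W of C, and Ψ(Φ(V)) = V for every thick subcategory V of B containing i_*A. -/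
open CategoryTheory Limits Pretriangulated

namespace Paper

section Recollement

variable {A : Type*} [Category A] [HasZeroObject A] [Preadditive A] [HasShift A ℤ]
  [∀ n : ℤ, (shiftFunctor A n).Additive] [Pretriangulated A]
variable {B : Type*} [Category B] [HasZeroObject B] [Preadditive B] [HasShift B ℤ]
  [∀ n : ℤ, (shiftFunctor B n).Additive] [Pretriangulated B]
variable {C : Type*} [Category C] [HasZeroObject C] [Preadditive C] [HasShift C ℤ]
  [∀ n : ℤ, (shiftFunctor C n).Additive] [Pretriangulated C]

variable (i_star : B ⥤ A) (i_lower : A ⥤ B) (i_shriek : B ⥤ A)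
  (j_lower : C ⥤ B) (j_star : B ⥤ C) (j_upper : C ⥤ B)
  [Functor.CommShift i_star ℤ] [Functor.IsTriangulated i_star]
  [Functor.CommShift i_lower ℤ] [Functor.IsTriangulated i_lower]
  [Functor.CommShift i_shriek ℤ] [Functor.IsTriangulated i_shriek]
  [Functor.CommShift j_lower ℤ] [Functor.IsTriangulated j_lower]
  [Functor.CommShift j_star ℤ] [Functor.IsTriangulated j_star]
  [Functor.CommShift j_upper ℤ] [Functor.IsTriangulated j_upper]

/-- Let `(A, B, C)` be a recollement of triangulated categories.  The assignments
`Φ : V ↦ j^* V` and `Ψ : W ↦ {M ∈ B | j^* M ∈ W}` are mutually inverse bijections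
between thick subcategories of `B` containing `i_* A` and thick subcategories of `C`:
`Φ(Ψ(W)) = W` for every thick `W ⊆ C` and `Ψ(Φ(V)) = V` for every thick `V ⊆ B`
containing `i_* A`. -/
theorem thick_bijection
    (R : Recollement i_star i_lower i_shriek j_lower j_star j_upper) :
    (∀ W : Set C, IsThick C W →
        imgSet j_star {M : B | j_star.obj M ∈ W} = W) ∧
      (∀ V : Set B, IsThick B V → (∀ a : A, i_lower.obj a ∈ V) →
        {M : B | j_star.obj M ∈ imgSet j_star V} = V) := by
  have hff : j_lower.Full := R.j_lower_full
  have hfa : j_lower.Faithful := R.j_lower_faithful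
  constructor
  · intro W hW
    ext w
    constructor
    · rintro ⟨M, hM, ⟨e⟩⟩
      exact hW.mem_of_iso e hM
    · intro hw
      refine ⟨j_lower.obj w, ?_, ?_⟩
      · have : IsIso (R.adj₃.unit.app w) := inferInstance
        exact hW.mem_of_iso (asIso (R.adj₃.unit.app w)) hw
      · exact ⟨(asIso (R.adj₃.unit.app w)).symm⟩
  · intro V hV hA
    ext M
    constructor
    · rintro ⟨X, hX, ⟨e⟩⟩
      -- e : j^*X ≅ j^*M
      -- Step 1: j_! j^* X ∈ V
      obtain ⟨γ, hT⟩ := R.r5 X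
      have h1 : (j_lower.obj (j_star.obj X))⟦(1:ℤ)⟧ ∈ V := by
        refine hV.mem_of_dist _ (rot_of_distTriang _ hT) hX (hA _)
      have h2 : j_lower.obj (j_star.obj X) ∈ V := by
        refine hV.mem_of_iso ((shiftEquiv B (1:ℤ)).unitIso.symm.app _) ?_
        exact hV.shift_mem _ (-1) h1
      -- Step 2: j_! j^* M ∈ V
      have h3 : j_lower.obj (j_star.obj M) ∈ V :=
        hV.mem_of_iso (j_lower.mapIso e) h2
      -- Step 3: conclude via inverse rotation of R5 triangle for M
      obtain ⟨γ', hT'⟩ := R.r5 M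
      have h4 := hV.mem_of_dist _ (inv_rot_of_distTriang _ hT')
        (hV.shift_mem _ (-1) (hA (i_star.obj M))) h3
      exact h4
    · intro hM
      exact ⟨M, hM, ⟨Iso.refl _⟩⟩

end Recollement

end Paper
end

section
/- Let (A, B, C, i^*, i_*, i^!, j_!, j^*, j_*) be a recollement of triangulated categories and let V be a thick subcategory of B. If i_*i^*V ∈ V for every V ∈ V, then i^*V, the full subcategory of A consisting of objects isomorphic to i^*V for some V ∈ V, is a thick subcategory of A. Dually, if i_*i^!V ∈ V for every V ∈ V, then i^!V, the full subcategory of A consisting of objects isomorphic to i^!V for some V ∈ V, is a thick subcategory of A. -/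
open CategoryTheory Limits Pretriangulated

namespace Paper

section Recollement

variable {A : Type*} [Category A] [HasZeroObject A] [Preadditive A] [HasShift A ℤ]
  [∀ n : ℤ, (shiftFunctor A n).Additive] [Pretriangulated A]
variable {B : Type*} [Category B] [HasZeroObject B] [Preadditive B] [HasShift B ℤ]
  [∀ n : ℤ, (shiftFunctor B n).Additive] [Pretriangulated B]
variable {C : Type*} [Category C] [HasZeroObject C] [Preadditive C] [HasShift C ℤ]
  [∀ n : ℤ, (shiftFunctor C n).Additive] [Pretriangulated C]

variable (i_star : B ⥤ A) (i_lower : A ⥤ B) (i_shriek : B ⥤ A)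
  (j_lower : C ⥤ B) (j_star : B ⥤ C) (j_upper : C ⥤ B)
  [Functor.CommShift i_star ℤ] [Functor.IsTriangulated i_star]
  [Functor.CommShift i_lower ℤ] [Functor.IsTriangulated i_lower]
  [Functor.CommShift i_shriek ℤ] [Functor.IsTriangulated i_shriek]
  [Functor.CommShift j_lower ℤ] [Functor.IsTriangulated j_lower]
  [Functor.CommShift j_star ℤ] [Functor.IsTriangulated j_star]
  [Functor.CommShift j_upper ℤ] [Functor.IsTriangulated j_upper]


theorem isThick_preimage (F : A ⥤ B) [Functor.CommShift F ℤ] [Functor.IsTriangulated F]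
    (V : Set B) (hV : IsThick B V) : IsThick A (F.obj ⁻¹' V) where
  mem_of_iso := fun e h => hV.mem_of_iso (F.mapIso e) h
  shift_mem := fun X n h =>
    hV.mem_of_iso ((F.commShiftIso n).app X).symm (hV.shift_mem _ n h)
  mem_of_dist := fun T hT h1 h2 =>
    hV.mem_of_dist (F.mapTriangle.obj T) (F.map_distinguished T hT) h1 h2
  mem_of_retract := fun X Y s r hsr h =>
    hV.mem_of_retract (F.obj X) (F.obj Y) (F.map s) (F.map r)
      (by rw [← F.map_comp, hsr, F.map_id]) h

/-- Let `(A, B, C)` be a recollement of triangulated categories and `V` a thick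
subcategory of `B`.  If `i_* i^* V ∈ V` for every `V ∈ V`, then the iso-closure of
`i^* V` is a thick subcategory of `A`; dually, if `i_* i^! V ∈ V` for every `V ∈ V`,
then the iso-closure of `i^! V` is a thick subcategory of `A`. -/
theorem isThick_i_images
    (R : Recollement i_star i_lower i_shriek j_lower j_star j_upper)
    (V : Set B) (hV : IsThick B V) :
    ((∀ X ∈ V, i_lower.obj (i_star.obj X) ∈ V) → IsThick A (imgSet i_star V)) ∧
      ((∀ X ∈ V, i_lower.obj (i_shriek.obj X) ∈ V) → IsThick A (imgSet i_shriek V)) := by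
  haveI := R.i_lower_full
  haveI := R.i_lower_faithful
  constructor
  · intro h
    have heq : imgSet i_star V = i_lower.obj ⁻¹' V := by
      ext a
      constructor
      · rintro ⟨X, hX, ⟨e⟩⟩
        exact hV.mem_of_iso (i_lower.mapIso e) (h X hX)
      · intro ha
        exact ⟨i_lower.obj a, ha, ⟨asIso (R.adj₁.counit.app a)⟩⟩
    rw [heq]
    exact isThick_preimage i_lower V hV
  · intro h
    have heq : imgSet i_shriek V = i_lower.obj ⁻¹' V := by
      ext a
      constructor
      · rintro ⟨X, hX, ⟨e⟩⟩
        exact hV.mem_of_iso (i_lower.mapIso e) (h X hX)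
      · intro ha
        exact ⟨i_lower.obj a, ha, ⟨(asIso (R.adj₂.unit.app a)).symm⟩⟩
    rw [heq]
    exact isThick_preimage i_lower V hV

end Recollement

end Paper
end

section
/- Let (A, B, C, i^*, i_*, i^!, j_!, j^*, j_*) be a recollement of triangulated categories and let V be a thick subcategory of B such that i_*A ∈ V for every object A of A; let j^*V denote the full subcategory of C of objects isomorphic to j^*V for some V ∈ V. Then the functors i_*, i^*, i^!, j_!, j^*, j_* restrict to functors between A, V and j^*V, and these restrictions (i^*|_V, i_*|_A : A → V, i^!|_V : V → A, j_!|_{j^*V}, j^*|_V : V → j^*V, j_*|_{j^*V} : j^*V → V) again satisfy the axioms (R1)–(R5) of a recollement, so that (A, V, j^*V) is a recollement of triangulated categories (V and j^*V being triangulated via the thick-subcategory structure). -/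
/-!
Thickness of `V`, applied to the triangles (R5) and (R4) of an object `X ∈ V`, puts `j_! j^* X`
and `j_* j^* X` into `V`; hence all six functors restrict. An adjunction restricts along fully
faithful inclusions with the same unit and counit, so (R4) and (R5) for the restriction are the
original triangles. In a full subcategory of a preadditive category an object is zero iff it is
zero in the ambient category, which turns (R2) for `B` into (R2) for `V`.
-/

open CategoryTheory Limits Pretriangulated

namespace Paper

section Recollement

variable {A : Type*} [Category A] [HasZeroObject A] [Preadditive A] [HasShift A ℤ]
  [∀ n : ℤ, (shiftFunctor A n).Additive] [Pretriangulated A]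
variable {B : Type*} [Category B] [HasZeroObject B] [Preadditive B] [HasShift B ℤ]
  [∀ n : ℤ, (shiftFunctor B n).Additive] [Pretriangulated B]
variable {C : Type*} [Category C] [HasZeroObject C] [Preadditive C] [HasShift C ℤ]
  [∀ n : ℤ, (shiftFunctor C n).Additive] [Pretriangulated C]

theorem IsThick.mem_obj₁_of_distTriang {S : Set B} (hS : IsThick B S) {T : Triangle B}
    (hT : T ∈ distTriang B) (h₂ : T.obj₂ ∈ S) (h₃ : T.obj₃ ∈ S) : T.obj₁ ∈ S :=
  hS.mem_of_iso (shiftShiftNeg _ (1 : ℤ))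
    (hS.shift_mem _ (-1) (hS.mem_of_dist _ (rot_of_distTriang _ hT) h₂ h₃))

theorem map_mem_of_mem_imgSet {X Y Z : Type*} [Category X] [Category Y] [Category Z]
    {F : X ⥤ Y} {G : Y ⥤ Z} {S : Set X} {T : Set Z}
    (hT : ∀ {a b : Z}, (a ≅ b) → a ∈ T → b ∈ T) (h : ∀ x ∈ S, G.obj (F.obj x) ∈ T)
    {y : Y} (hy : y ∈ imgSet F S) : G.obj y ∈ T := by
  obtain ⟨x, hx, ⟨e⟩⟩ := hy
  exact hT (G.mapIso e) (h x hx)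

theorem isZero_fullSubcategory_iff {D : Type*} [Category D] [Preadditive D]
    {P : ObjectProperty D} (X : P.FullSubcategory) : IsZero X ↔ IsZero X.obj :=
  ⟨P.ι.map_isZero, IsZero.of_full_of_faithful_of_isZero P.ι X⟩

theorem essImage_lift_iff {D E : Type*} [Category D] [Category E] {P : ObjectProperty E}
    (F : D ⥤ E) (hF : ∀ X, P (F.obj X)) (Y : P.FullSubcategory) :
    (P.lift F hF).essImage Y ↔ F.essImage Y.obj :=
  ⟨fun ⟨X, ⟨e⟩⟩ => ⟨X, ⟨P.ι.mapIso e⟩⟩, fun ⟨X, ⟨e⟩⟩ => ⟨X, ⟨P.isoMk e⟩⟩⟩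

section AdjunctionRestriction

variable {D E : Type*} [Category D] [Category E] {F : D ⥤ E} {G : E ⥤ D} (adj : F ⊣ G)

noncomputable def compιAdjunctionLift {P : ObjectProperty D} (hG : ∀ Y, P (G.obj Y)) :
    P.ι ⋙ F ⊣ P.lift G hG :=
  adj.restrictFullyFaithful P.fullyFaithfulι (Functor.FullyFaithful.id _) (Iso.refl _)
    (Iso.refl _)

@[simp]
theorem ι_map_compιAdjunctionLift_unit_app {P : ObjectProperty D} (hG : ∀ Y, P (G.obj Y))
    (X : P.FullSubcategory) :
    P.ι.map ((compιAdjunctionLift adj hG).unit.app X) = adj.unit.app X.obj := by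
  rw [compιAdjunctionLift, Adjunction.map_restrictFullyFaithful_unit_app]
  simp

noncomputable def liftAdjunctionCompι {Q : ObjectProperty E} (hF : ∀ X, Q (F.obj X)) :
    Q.lift F hF ⊣ Q.ι ⋙ G :=
  adj.restrictFullyFaithful (Functor.FullyFaithful.id _) Q.fullyFaithfulι (Iso.refl _)
    (Iso.refl _)

@[simp]
theorem ι_map_liftAdjunctionCompι_counit_app {Q : ObjectProperty E} (hF : ∀ X, Q (F.obj X))
    (Y : Q.FullSubcategory) :
    Q.ι.map ((liftAdjunctionCompι adj hF).counit.app Y) = adj.counit.app Y.obj := by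
  rw [liftAdjunctionCompι, Adjunction.map_restrictFullyFaithful_counit_app]
  simp

variable {P : ObjectProperty D} {Q : ObjectProperty E}
  (hF : ∀ X : P.FullSubcategory, Q (F.obj X.obj)) (hG : ∀ Y : Q.FullSubcategory, P (G.obj Y.obj))

noncomputable def liftAdjunctionLift : Q.lift (P.ι ⋙ F) hF ⊣ P.lift (Q.ι ⋙ G) hG :=
  adj.restrictFullyFaithful P.fullyFaithfulι Q.fullyFaithfulι (Iso.refl _) (Iso.refl _)

@[simp]
theorem ι_map_liftAdjunctionLift_unit_app (X : P.FullSubcategory) :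
    P.ι.map ((liftAdjunctionLift adj hF hG).unit.app X) = adj.unit.app X.obj := by
  rw [liftAdjunctionLift, Adjunction.map_restrictFullyFaithful_unit_app]
  simp

@[simp]
theorem ι_map_liftAdjunctionLift_counit_app (Y : Q.FullSubcategory) :
    Q.ι.map ((liftAdjunctionLift adj hF hG).counit.app Y) = adj.counit.app Y.obj := by
  rw [liftAdjunctionLift, Adjunction.map_restrictFullyFaithful_counit_app]
  simp

end AdjunctionRestriction

section Restriction

variable {A' C' : Type*} [Category A'] [Category C'] {i_star : B ⥤ A'} {i_lower : A' ⥤ B}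
  {i_shriek : B ⥤ A'} {j_lower : C' ⥤ B} {j_star : B ⥤ C'} {j_upper : C' ⥤ B}

theorem Recollement.j_lower_j_star_mem
    (R : Recollement i_star i_lower i_shriek j_lower j_star j_upper) {V : Set B}
    (hV : IsThick B V) (hA : ∀ a : A', i_lower.obj a ∈ V) {X : B} (hX : X ∈ V) :
    j_lower.obj (j_star.obj X) ∈ V := by
  obtain ⟨_, hT⟩ := R.r5 X
  exact hV.mem_obj₁_of_distTriang hT hX (hA _)

theorem Recollement.j_upper_j_star_mem
    (R : Recollement i_star i_lower i_shriek j_lower j_star j_upper) {V : Set B}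
    (hV : IsThick B V) (hA : ∀ a : A', i_lower.obj a ∈ V) {X : B} (hX : X ∈ V) :
    j_upper.obj (j_star.obj X) ∈ V := by
  obtain ⟨_, hT⟩ := R.r4 X
  exact hV.mem_of_dist _ hT (hA _) hX

end Restriction

variable (i_star : B ⥤ A) (i_lower : A ⥤ B) (i_shriek : B ⥤ A)
  (j_lower : C ⥤ B) (j_star : B ⥤ C) (j_upper : C ⥤ B)
  [Functor.CommShift i_star ℤ] [Functor.IsTriangulated i_star]
  [Functor.CommShift i_lower ℤ] [Functor.IsTriangulated i_lower]
  [Functor.CommShift i_shriek ℤ] [Functor.IsTriangulated i_shriek]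
  [Functor.CommShift j_lower ℤ] [Functor.IsTriangulated j_lower]
  [Functor.CommShift j_star ℤ] [Functor.IsTriangulated j_star]
  [Functor.CommShift j_upper ℤ] [Functor.IsTriangulated j_upper]

/-- Let `(A, B, C)` be a recollement of triangulated categories and `V` a thick
subcategory of `B` containing `i_* A` for every object of `A`; let `j^* V` be the
iso-closed image of `V` under `j^*` in `C`.  Then the six functors restrict to functors
between `A`, `V` and `j^* V` (in the sense that they commute with the full-subcategory
inclusions up to isomorphism), and these restrictions again satisfy the recollement
axioms (R1)-(R5), where the distinguished triangles of the thick subcategories `V` and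
`j^* V` are those triangles whose image in the ambient category `B` is distinguished. -/
theorem restricted_recollement
    (R : Recollement i_star i_lower i_shriek j_lower j_star j_upper)
    (V : Set B) (hV : IsThick B V) (hA : ∀ a : A, i_lower.obj a ∈ V) :
    ∃ (iStar' : ObjectProperty.FullSubcategory (· ∈ V) ⥤ A)
      (iLower' : A ⥤ ObjectProperty.FullSubcategory (· ∈ V))
      (iShriek' : ObjectProperty.FullSubcategory (· ∈ V) ⥤ A)
      (jLower' : ObjectProperty.FullSubcategory (· ∈ imgSet j_star V) ⥤ ObjectProperty.FullSubcategory (· ∈ V))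
      (jStar' : ObjectProperty.FullSubcategory (· ∈ V) ⥤ ObjectProperty.FullSubcategory (· ∈ imgSet j_star V))
      (jUpper' : ObjectProperty.FullSubcategory (· ∈ imgSet j_star V) ⥤ ObjectProperty.FullSubcategory (· ∈ V))
      (adj₁' : iStar' ⊣ iLower') (adj₂' : iLower' ⊣ iShriek')
      (adj₃' : jLower' ⊣ jStar') (adj₄' : jStar' ⊣ jUpper'),
      -- the six functors are restrictions of the original ones
      Nonempty (iStar' ≅ ObjectProperty.ι (· ∈ V) ⋙ i_star) ∧
      Nonempty (iLower' ⋙ ObjectProperty.ι (· ∈ V) ≅ i_lower) ∧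
      Nonempty (iShriek' ≅ ObjectProperty.ι (· ∈ V) ⋙ i_shriek) ∧
      Nonempty (jLower' ⋙ ObjectProperty.ι (· ∈ V) ≅
        ObjectProperty.ι (· ∈ imgSet j_star V) ⋙ j_lower) ∧
      Nonempty (jStar' ⋙ ObjectProperty.ι (· ∈ imgSet j_star V) ≅
        ObjectProperty.ι (· ∈ V) ⋙ j_star) ∧
      Nonempty (jUpper' ⋙ ObjectProperty.ι (· ∈ V) ≅
        ObjectProperty.ι (· ∈ imgSet j_star V) ⋙ j_upper) ∧
      -- (R3): `i_*`, `j_!` and `j_*` are fully faithful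
      iLower'.Full ∧ iLower'.Faithful ∧ jLower'.Full ∧ jLower'.Faithful ∧
        jUpper'.Full ∧ jUpper'.Faithful ∧
      -- (R2): the essential image of `i_*` is the kernel of `j^*`
      (∀ X : ObjectProperty.FullSubcategory (· ∈ V), iLower'.essImage X ↔ IsZero (jStar'.obj X)) ∧
      -- (R4): `i_* i^! X → X → j_* j^* X → Σ(i_* i^! X)` is a distinguished triangle
      (∀ X : ObjectProperty.FullSubcategory (· ∈ V),
        ∃ γ : (ObjectProperty.ι (· ∈ V)).obj (jUpper'.obj (jStar'.obj X)) ⟶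
            ((ObjectProperty.ι (· ∈ V)).obj (iLower'.obj (iShriek'.obj X)))⟦(1 : ℤ)⟧,
          Triangle.mk ((ObjectProperty.ι (· ∈ V)).map (adj₂'.counit.app X))
            ((ObjectProperty.ι (· ∈ V)).map (adj₄'.unit.app X)) γ ∈ distTriang B) ∧
      -- (R5): `j_! j^* X → X → i_* i^* X → Σ(j_! j^* X)` is a distinguished triangle
      (∀ X : ObjectProperty.FullSubcategory (· ∈ V),
        ∃ γ : (ObjectProperty.ι (· ∈ V)).obj (iLower'.obj (iStar'.obj X)) ⟶
            ((ObjectProperty.ι (· ∈ V)).obj (jLower'.obj (jStar'.obj X)))⟦(1 : ℤ)⟧,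
          Triangle.mk ((ObjectProperty.ι (· ∈ V)).map (adj₃'.counit.app X))
            ((ObjectProperty.ι (· ∈ V)).map (adj₁'.unit.app X)) γ ∈ distTriang B) := by
  have hjl : ∀ Y : ObjectProperty.FullSubcategory (· ∈ imgSet j_star V), j_lower.obj Y.obj ∈ V :=
    fun Y => map_mem_of_mem_imgSet hV.mem_of_iso (fun _ => R.j_lower_j_star_mem hV hA) Y.property
  have hju : ∀ Y : ObjectProperty.FullSubcategory (· ∈ imgSet j_star V), j_upper.obj Y.obj ∈ V :=
    fun Y => map_mem_of_mem_imgSet hV.mem_of_iso (fun _ => R.j_upper_j_star_mem hV hA) Y.property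
  have hjs : ∀ X : ObjectProperty.FullSubcategory (· ∈ V), j_star.obj X.obj ∈ imgSet j_star V :=
    fun X => ⟨X.obj, X.property, ⟨Iso.refl _⟩⟩
  have := R.i_lower_full; have := R.i_lower_faithful
  have := R.j_lower_full; have := R.j_lower_faithful
  have := R.j_upper_full; have := R.j_upper_faithful
  refine ⟨_, _, _, _, _, _, compιAdjunctionLift R.adj₁ hA, liftAdjunctionCompι R.adj₂ hA,
    liftAdjunctionLift R.adj₃ hjl hjs, liftAdjunctionLift R.adj₄ hjs hju,
    ⟨Iso.refl _⟩, ⟨ObjectProperty.liftCompιIso _ _ _⟩, ⟨Iso.refl _⟩,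
    ⟨ObjectProperty.liftCompιIso _ _ _⟩, ⟨ObjectProperty.liftCompιIso _ _ _⟩,
    ⟨ObjectProperty.liftCompιIso _ _ _⟩, inferInstance, inferInstance, inferInstance,
    inferInstance, inferInstance, inferInstance, fun X => ?_, fun X => ?_, fun X => ?_⟩
  · rw [essImage_lift_iff, R.essImage_i_lower, isZero_fullSubcategory_iff]
    rfl
  · obtain ⟨γ, hT⟩ := R.r4 X.obj
    exact ⟨γ, by
      rwa [ι_map_liftAdjunctionCompι_counit_app, ι_map_liftAdjunctionLift_unit_app]⟩
  · obtain ⟨γ, hT⟩ := R.r5 X.obj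
    exact ⟨γ, by
      rwa [ι_map_liftAdjunctionLift_counit_app, ι_map_compιAdjunctionLift_unit_app]⟩

end Recollement

end Paper
end

section
/- Let (A, B, C, i^*, i_*, i^!, j_!, j^*, j_*) be a recollement of triangulated categories, and let (T_1, F_1) and (T_2, F_2) be bounded hereditary cotorsion pairs in A and C, respectively. Then the glued pair (T, F), where T = {B ∈ B : i^*B ∈ T_1 and j^*B ∈ T_2} and F = {B ∈ B : i^!B ∈ F_1 and j^*B ∈ F_2}, is a bounded hereditary cotorsion pair in B. -/
set_option linter.unusedSectionVars false
set_option maxHeartbeats 1000000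


open CategoryTheory Limits Pretriangulated

namespace Paper

section Zeros

lemma homEquiv_zero' {C₁ C₂ : Type*} [Category C₁] [Category C₂]
    [Preadditive C₁] [Preadditive C₂]
    {L : C₁ ⥤ C₂} {R : C₂ ⥤ C₁} (adj : L ⊣ R) [R.Additive] (X : C₁) (Y : C₂) :
    adj.homEquiv X Y 0 = 0 := by
  rw [Adjunction.homEquiv_unit, Functor.map_zero, comp_zero]

lemma homEquiv_symm_zero' {C₁ C₂ : Type*} [Category C₁] [Category C₂]
    [Preadditive C₁] [Preadditive C₂]
    {L : C₁ ⥤ C₂} {R : C₂ ⥤ C₁} (adj : L ⊣ R) [L.Additive] (X : C₁) (Y : C₂) :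
    (adj.homEquiv X Y).symm 0 = 0 := by
  rw [Adjunction.homEquiv_counit, Functor.map_zero, zero_comp]

/-- transfer of hom-vanishing along an adjunction, with a shift. -/
lemma adj_vanish_iff {C₁ C₂ : Type*} [Category C₁] [Category C₂]
    [Preadditive C₁] [Preadditive C₂] [HasShift C₁ ℤ] [HasShift C₂ ℤ]
    {L : C₁ ⥤ C₂} {R : C₂ ⥤ C₁} (adj : L ⊣ R) [L.Additive] [R.Additive]
    [R.CommShift ℤ] (c : C₁) (Y : C₂) (k : ℤ) :
    (∀ g : L.obj c ⟶ Y⟦k⟧, g = 0) ↔ (∀ g : c ⟶ (R.obj Y)⟦k⟧, g = 0) := by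
  let e : (L.obj c ⟶ Y⟦k⟧) ≃ (c ⟶ (R.obj Y)⟦k⟧) :=
    (adj.homEquiv c (Y⟦k⟧)).trans ((Iso.refl c).homCongr ((R.commShiftIso k).app Y))
  have he : e 0 = 0 := by
    simp only [e, Equiv.trans_apply, homEquiv_zero' adj, Iso.homCongr_apply,
      Iso.refl_inv, zero_comp, comp_zero, Limits.comp_zero, Limits.zero_comp]
  constructor
  · intro h g
    have : e.symm g = 0 := h _
    rw [← e.apply_symm_apply g, this, he]
  · intro h g
    have : e g = 0 := h _
    have := congrArg e.symm this
    rw [Equiv.symm_apply_apply] at this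
    rw [this, ← he, Equiv.symm_apply_apply]

end Zeros

section Helpers

variable {D : Type*} [Category D] [HasZeroObject D] [Preadditive D] [HasShift D ℤ]
  [∀ n : ℤ, (shiftFunctor D n).Additive] [Pretriangulated D]

/-- source-shift transfer of hom-vanishing. -/
lemma vanish_shift_src {Y f : D} {m : ℤ}
    (h : ∀ k : ℤ, m ≤ k → ∀ g : Y ⟶ f⟦k⟧, g = 0) (s : ℤ) :
    ∀ k : ℤ, m + s ≤ k → ∀ g : Y⟦s⟧ ⟶ f⟦k⟧, g = 0 := by
  intro k hk g
  haveI : (shiftEquiv D s).functor.Additive := (inferInstance : (shiftFunctor D s).Additive)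
  have adj := (shiftEquiv D s).toAdjunction
  set e := adj.homEquiv Y (f⟦k⟧) with he
  have h1 : e g ≫ (shiftFunctorAdd' D k (-s) (k - s) (by ring)).inv.app f = 0 :=
    h (k - s) (by omega) _
  have h2 : e g = 0 := by
    have := congrArg (fun p => p ≫ (shiftFunctorAdd' D k (-s) (k - s) (by ring)).hom.app f) h1
    exact (cancel_mono ((shiftFunctorAdd' D k (-s) (k - s) (by ring)).inv.app f)).1 (h1.trans zero_comp.symm)
  have := congrArg e.symm h2
  rw [show e.symm (e g) = g from e.symm_apply_apply g] at this
  rw [this, he, homEquiv_symm_zero']; rfl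

/-- target-shift transfer of hom-vanishing. -/
lemma vanish_shift_tgt {t Y : D} {m : ℤ}
    (h : ∀ k : ℤ, m ≤ k → ∀ g : t ⟶ Y⟦k⟧, g = 0) (s : ℤ) :
    ∀ k : ℤ, m - s ≤ k → ∀ g : t ⟶ (Y⟦s⟧)⟦k⟧, g = 0 := by
  intro k hk g
  have h1 : g ≫ (shiftFunctorAdd' D s k (s + k) rfl).inv.app Y = 0 :=
    h (s + k) (by omega) _
  have := congrArg (fun p => p ≫ (shiftFunctorAdd' D s k (s + k) rfl).hom.app Y) h1
  simpa using this

end Helpers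


section CP

variable {D : Type*} [Category D] [HasZeroObject D] [Preadditive D] [HasShift D ℤ]
  [∀ n : ℤ, (shiftFunctor D n).Additive] [Pretriangulated D]

lemma hat_vanish {T F : Set D}
    (orth : ∀ X ∈ T, ∀ Y ∈ F, ∀ k : ℤ, 1 ≤ k → ∀ f : X ⟶ Y⟦k⟧, f = 0) :
    ∀ n : ℕ, ∀ Z ∈ hatAux D T n, ∀ f ∈ F, ∀ k : ℤ, (n : ℤ) ≤ k →
      ∀ g : Z ⟶ f⟦k⟧, g = 0 := by
  intro n
  induction n with
  | zero => intro Z hZ f hf k hk g; exact hZ.eq_of_src g 0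
  | succ n ih =>
    rintro Z ⟨Tr, hTr, h1, h2, ⟨e⟩⟩ f hf k hk g
    have hzero : Tr.mor₂ ≫ (e.hom ≫ g) = 0 :=
      orth Tr.obj₂ h2 f hf k (by omega) _
    obtain ⟨h', hh'⟩ := Triangle.yoneda_exact₃ _ hTr (e.hom ≫ g) hzero
    have h'0 : h' = 0 := by
      refine vanish_shift_src (fun k' hk' g' => ih Tr.obj₁ h1 f hf k' hk' g') 1 k ?_ h'
      push_cast at hk ⊢; omega
    have : e.hom ≫ g = 0 := by rw [hh', h'0, comp_zero]
    calc g = e.inv ≫ (e.hom ≫ g) := by rw [← Category.assoc, e.inv_hom_id, Category.id_comp]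
    _ = 0 := by rw [this, comp_zero]

lemma vee_vanish {T F : Set D}
    (orth : ∀ X ∈ T, ∀ Y ∈ F, ∀ k : ℤ, 1 ≤ k → ∀ f : X ⟶ Y⟦k⟧, f = 0) :
    ∀ n : ℕ, ∀ Z ∈ veeAux D F n, ∀ t ∈ T, ∀ k : ℤ, (n : ℤ) ≤ k →
      ∀ g : t ⟶ Z⟦k⟧, g = 0 := by
  intro n
  induction n with
  | zero =>
    intro Z hZ t ht k hk g
    exact (((shiftFunctor D k).map_isZero hZ).eq_of_tgt g 0)
  | succ n ih =>
    rintro Z ⟨Tr, hTr, ⟨e⟩, h2, h3⟩ t ht k hk g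
    have key : ∀ g' : t ⟶ (Tr.obj₁)⟦k⟧, g' = 0 := by
      intro g'
      have hinv := inv_rot_of_distTriang _ (Triangle.shift_distinguished Tr hTr k)
      obtain ⟨h', hh'⟩ := Triangle.coyoneda_exact₂ _ hinv g'
        (orth t ht Tr.obj₂ h2 k (by omega) _)
      have h'0 : h' = 0 := by
        refine vanish_shift_tgt (fun k' hk' g'' => ih Tr.obj₃ h3 t ht k' hk' g'') k (-1) ?_ h'
        push_cast at hk ⊢; omega
      rw [hh', h'0, zero_comp]; rfl
    have hgi : g ≫ (shiftFunctor D k).map e.inv = 0 := key _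
    calc g = (g ≫ (shiftFunctor D k).map e.inv) ≫ (shiftFunctor D k).map e.hom := by
          rw [Category.assoc, ← Functor.map_comp, e.inv_hom_id,
            CategoryTheory.Functor.map_id, Category.comp_id]
    _ = 0 := by rw [hgi, zero_comp]

lemma vanish_hat {T F : Set D}
    (orth : ∀ X ∈ T, ∀ Y ∈ F, ∀ k : ℤ, 1 ≤ k → ∀ f : X ⟶ Y⟦k⟧, f = 0)
    (tri₁ : ∀ X : D, ∃ (Fx Tx : D) (_ : Fx ∈ F) (_ : Tx ∈ T) (f : Fx ⟶ Tx) (g : Tx ⟶ X)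
      (h : X ⟶ Fx⟦(1 : ℤ)⟧), Triangle.mk f g h ∈ distTriang D)
    (t_retract : ∀ (X Y : D) (s : X ⟶ Y) (r : Y ⟶ X), s ≫ r = 𝟙 X → Y ∈ T → X ∈ T) :
    ∀ n : ℕ, ∀ Z : D, (∀ f ∈ F, ∀ k : ℤ, (n : ℤ) + 1 ≤ k → ∀ g : Z ⟶ f⟦k⟧, g = 0) →
      Z ∈ hatAux D T (n + 1) := by
  intro n
  induction n with
  | zero =>
    intro Z hZ
    obtain ⟨Fz, Tz, hF, hT, a, b, c, hdist⟩ := tri₁ Z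
    have hc : c = 0 := hZ Fz hF 1 (by omega) c
    obtain ⟨s, hs⟩ := Triangle.coyoneda_exact₂ _ (rot_of_distTriang _ hdist) (𝟙 Z)
      (by change 𝟙 Z ≫ c = 0; rw [hc, comp_zero])
    have hZT : Z ∈ T := t_retract Z Tz s b hs.symm hT
    exact ⟨(contractibleTriangle Z).invRotate,
      inv_rot_of_distTriang _ (contractible_distinguished Z),
      Functor.map_isZero _ (isZero_zero D), hZT, ⟨Iso.refl _⟩⟩
  | succ n ih =>
    intro Z hZ
    obtain ⟨Fz, Tz, hF, hT, a, b, c, hdist⟩ := tri₁ Z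
    have hFz : ∀ f ∈ F, ∀ k : ℤ, (n : ℤ) + 1 ≤ k → ∀ g : Fz ⟶ f⟦k⟧, g = 0 := by
      intro f hf k hk g
      obtain ⟨h', hh'⟩ := Triangle.yoneda_exact₂ _ (inv_rot_of_distTriang _ hdist) g
        (by
          refine vanish_shift_src (m := ((n : ℤ) + 1) + 1)
            (fun k' hk' g' => hZ f hf k' (by push_cast; omega) g')
            (-1) k (by omega) _)
      have h'0 : h' = 0 := orth Tz hT f hf k (by omega) h'
      rw [hh', h'0, comp_zero]; rfl
    exact ⟨Triangle.mk a b c, hdist, ih Fz hFz, hT, ⟨Iso.refl _⟩⟩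

lemma vanish_vee {T F : Set D}
    (orth : ∀ X ∈ T, ∀ Y ∈ F, ∀ k : ℤ, 1 ≤ k → ∀ f : X ⟶ Y⟦k⟧, f = 0)
    (tri₂ : ∀ X : D, ∃ (Fx Tx : D) (_ : Fx ∈ F) (_ : Tx ∈ T) (f : X ⟶ Fx) (g : Fx ⟶ Tx)
      (h : Tx ⟶ X⟦(1 : ℤ)⟧), Triangle.mk f g h ∈ distTriang D)
    (f_retract : ∀ (X Y : D) (s : X ⟶ Y) (r : Y ⟶ X), s ≫ r = 𝟙 X → Y ∈ F → X ∈ F) :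
    ∀ n : ℕ, ∀ Z : D, (∀ t ∈ T, ∀ k : ℤ, (n : ℤ) + 1 ≤ k → ∀ g : t ⟶ Z⟦k⟧, g = 0) →
      Z ∈ veeAux D F (n + 1) := by
  intro n
  induction n with
  | zero =>
    intro Z hZ
    obtain ⟨Fz, Tz, hF, hT, a, b, c, hdist⟩ := tri₂ Z
    have hc : c = 0 := hZ Tz hT 1 (by omega) c
    obtain ⟨r, hr⟩ := Triangle.yoneda_exact₂ _ (inv_rot_of_distTriang _ hdist) (𝟙 Z)
      (by change (-(shiftFunctor D (-1)).map c ≫ (shiftFunctorCompIsoId D 1 (-1) (by omega)).hom.app Z) ≫ 𝟙 Z = 0; rw [hc, Functor.map_zero]; simp)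
    have hZF : Z ∈ F := f_retract Z Fz a r hr.symm hF
    exact ⟨contractibleTriangle Z, contractible_distinguished Z, ⟨Iso.refl _⟩, hZF,
      isZero_zero D⟩
  | succ n ih =>
    intro Z hZ
    obtain ⟨Fz, Tz, hF, hT, a, b, c, hdist⟩ := tri₂ Z
    have hTz : ∀ t ∈ T, ∀ k : ℤ, (n : ℤ) + 1 ≤ k → ∀ g : t ⟶ Tz⟦k⟧, g = 0 := by
      intro t ht k hk g
      have hrot := rot_of_distTriang _
        (Triangle.shift_distinguished (Triangle.mk a b c) hdist k)
      obtain ⟨h', hh'⟩ := Triangle.coyoneda_exact₂ _ hrot g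
        (by
          refine vanish_shift_tgt (m := ((n : ℤ) + 1) + 1)
            (fun k' hk' g'' => hZ t ht k' (by push_cast; omega) g'')
            k 1 (by omega) _)
      have h'0 : h' = 0 := orth t ht Fz hF k (by omega) h'
      rw [hh', h'0, zero_comp]; rfl
    exact ⟨Triangle.mk a b c, hdist, ⟨Iso.refl _⟩, hF, ih Tz hTz⟩


lemma cone_iso {D : Type*} [Category D] [HasZeroObject D] [Preadditive D] [HasShift D ℤ]
    [∀ n : ℤ, (shiftFunctor D n).Additive] [Pretriangulated D]
    (T₁ T₂ : Triangle D) (hT₁ : T₁ ∈ distTriang D) (hT₂ : T₂ ∈ distTriang D)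
    (e₁ : T₁.obj₁ ≅ T₂.obj₁) (e₂ : T₁.obj₂ ≅ T₂.obj₂)
    (comm : T₁.mor₁ ≫ e₂.hom = e₁.hom ≫ T₂.mor₁) :
    ∃ e₃ : T₁.obj₃ ≅ T₂.obj₃, T₁.mor₂ ≫ e₃.hom = e₂.hom ≫ T₂.mor₂ := by
  obtain ⟨e', h1, h2⟩ := Pretriangulated.exists_iso_of_arrow_iso T₁ T₂ hT₁ hT₂
    (Arrow.isoMk e₁ e₂ comm.symm)
  refine ⟨Triangle.π₃.mapIso e', ?_⟩
  have h3 := e'.hom.comm₂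
  rw [h2] at h3
  simpa using h3

end CP


section Recollement

variable {A : Type*} [Category A] [HasZeroObject A] [Preadditive A] [HasShift A ℤ]
  [∀ n : ℤ, (shiftFunctor A n).Additive] [Pretriangulated A]
variable {B : Type*} [Category B] [HasZeroObject B] [Preadditive B] [HasShift B ℤ]
  [∀ n : ℤ, (shiftFunctor B n).Additive] [Pretriangulated B]
variable {C : Type*} [Category C] [HasZeroObject C] [Preadditive C] [HasShift C ℤ]
  [∀ n : ℤ, (shiftFunctor C n).Additive] [Pretriangulated C]

variable (i_star : B ⥤ A) (i_lower : A ⥤ B) (i_shriek : B ⥤ A)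
  (j_lower : C ⥤ B) (j_star : B ⥤ C) (j_upper : C ⥤ B)
  [Functor.CommShift i_star ℤ] [Functor.IsTriangulated i_star]
  [Functor.CommShift i_lower ℤ] [Functor.IsTriangulated i_lower]
  [Functor.CommShift i_shriek ℤ] [Functor.IsTriangulated i_shriek]
  [Functor.CommShift j_lower ℤ] [Functor.IsTriangulated j_lower]
  [Functor.CommShift j_star ℤ] [Functor.IsTriangulated j_star]
  [Functor.CommShift j_upper ℤ] [Functor.IsTriangulated j_upper]

section Lemmas

variable (R : Recollement i_star i_lower i_shriek j_lower j_star j_upper)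

include R

lemma isZero_j_star_i_lower (a : A) : IsZero (j_star.obj (i_lower.obj a)) :=
  (R.essImage_i_lower _).1 (Functor.obj_mem_essImage _ a)

lemma isZero_i_star_j_lower (c : C) : IsZero (i_star.obj (j_lower.obj c)) := by
  rw [IsZero.iff_id_eq_zero]
  have hu : (R.adj₃.homEquiv _ _) ((R.adj₁.homEquiv _ _) (𝟙 (i_star.obj (j_lower.obj c)))) = 0 :=
    (isZero_j_star_i_lower i_star i_lower i_shriek j_lower j_star j_upper R _).eq_of_tgt _ 0
  have h2 := congrArg (R.adj₃.homEquiv _ _).symm hu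
  rw [Equiv.symm_apply_apply, homEquiv_symm_zero'] at h2
  have h3 := congrArg (R.adj₁.homEquiv _ _).symm h2
  rwa [Equiv.symm_apply_apply, homEquiv_symm_zero'] at h3

lemma isZero_i_shriek_j_upper (c : C) : IsZero (i_shriek.obj (j_upper.obj c)) := by
  rw [IsZero.iff_id_eq_zero]
  have hx : (R.adj₄.homEquiv _ _).symm ((R.adj₂.homEquiv _ _).symm
      (𝟙 (i_shriek.obj (j_upper.obj c)))) = 0 :=
    (isZero_j_star_i_lower i_star i_lower i_shriek j_lower j_star j_upper R _).eq_of_src _ 0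
  have h2 := congrArg (R.adj₄.homEquiv _ _) hx
  rw [Equiv.apply_symm_apply, homEquiv_zero'] at h2
  have h3 := congrArg (R.adj₂.homEquiv _ _) h2
  rwa [Equiv.apply_symm_apply, homEquiv_zero'] at h3

lemma glued_orth (T₁ F₁ : Set A) (T₂ F₂ : Set C)
    (h₁ : IsBddHeredCotorsionPair A T₁ F₁) (h₂ : IsBddHeredCotorsionPair C T₂ F₂) :
    ∀ X ∈ gluedT i_star j_star T₁ T₂, ∀ Y ∈ gluedF i_shriek j_star F₁ F₂,
      ∀ k : ℤ, 1 ≤ k → ∀ f : X ⟶ Y⟦k⟧, f = 0 := by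
  rintro X ⟨hXi, hXj⟩ Y ⟨hYi, hYj⟩ k hk f
  obtain ⟨γ₅, h5⟩ := R.r5 X
  have hmor1 : (R.adj₃.counit.app X) ≫ f = 0 :=
    (adj_vanish_iff R.adj₃ (j_star.obj X) Y k).2
      (fun g => h₂.orth _ hXj _ hYj k hk g) _
  obtain ⟨h', hh'⟩ := Triangle.yoneda_exact₂ _ h5 f hmor1
  have h'0 : h' = 0 :=
    (adj_vanish_iff R.adj₂ (i_star.obj X) Y k).2
      (fun g => h₁.orth _ hXi _ hYi k hk g) _
  rw [hh', h'0, comp_zero]; rfl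


lemma glued_tri₁ (T₁ F₁ : Set A) (T₂ F₂ : Set C)
    (h₁ : IsBddHeredCotorsionPair A T₁ F₁) (h₂ : IsBddHeredCotorsionPair C T₂ F₂) :
    ∀ X : B, ∃ (Fx Tx : B) (_ : Fx ∈ gluedF i_shriek j_star F₁ F₂)
      (_ : Tx ∈ gluedT i_star j_star T₁ T₂) (f : Fx ⟶ Tx) (g : Tx ⟶ X)
      (h : X ⟶ Fx⟦(1 : ℤ)⟧), Triangle.mk f g h ∈ distTriang B := by
  haveI := R.i_lower_full; haveI := R.i_lower_faithful
  haveI := R.j_lower_full; haveI := R.j_lower_faithful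
  haveI := R.j_upper_full; haveI := R.j_upper_faithful
  intro X
  obtain ⟨F_C, T_C, hFC, hTC, α, β, γ, hC⟩ := h₂.tri₁ (j_star.obj X)
  set u := (R.adj₃.homEquiv T_C X).symm β with hu_def
  obtain ⟨Y, v, w, hY⟩ := distinguished_cocone_triangle u
  have hβ : R.adj₃.unit.app T_C ≫ j_star.map u = β := by
    have h0 : R.adj₃.homEquiv T_C X u = β := Equiv.apply_symm_apply _ β
    rwa [Adjunction.homEquiv_unit] at h0
  obtain ⟨eY, heY⟩ := cone_iso ((Triangle.mk α β γ).rotate)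
    (j_star.mapTriangle.obj (Triangle.mk u v w))
    (rot_of_distTriang _ hC) (j_star.map_distinguished _ hY)
    (@asIso _ _ _ _ (R.adj₃.unit.app T_C) (inferInstanceAs (IsIso (R.adj₃.unit.app T_C)))) (Iso.refl _)
    (by exact (Category.comp_id _).trans hβ.symm)
  have heY' : γ ≫ eY.hom = j_star.map v := heY.trans (Category.id_comp _)
  -- the A-side approximation
  obtain ⟨f1, a1, hf1, ha1, α₁, β₁, γ₁, hA⟩ := h₁.tri₁ (i_shriek.obj Y)
  set p := (R.adj₂.homEquiv a1 Y).symm β₁ with hp_def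
  obtain ⟨Q, q, r, hQ⟩ := distinguished_cocone_triangle p
  have hβ₁ : R.adj₂.unit.app a1 ≫ i_shriek.map p = β₁ := by
    have h0 : R.adj₂.homEquiv a1 Y p = β₁ := Equiv.apply_symm_apply _ β₁
    rwa [Adjunction.homEquiv_unit] at h0
  obtain ⟨eQ, heQ⟩ := cone_iso ((Triangle.mk α₁ β₁ γ₁).rotate)
    (i_shriek.mapTriangle.obj (Triangle.mk p q r))
    (rot_of_distTriang _ hA) (i_shriek.map_distinguished _ hQ)
    (@asIso _ _ _ _ (R.adj₂.unit.app a1) (inferInstanceAs (IsIso (R.adj₂.unit.app a1)))) (Iso.refl _)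
    (by exact (Category.comp_id _).trans hβ₁.symm)
  -- isomorphisms coming from vanishing
  have hIsoV : IsIso (i_star.map v) :=
    (Triangle.isZero₁_iff_isIso₂ _ (i_star.map_distinguished _ hY)).1
      (isZero_i_star_j_lower i_star i_lower i_shriek j_lower j_star j_upper R T_C)
  have hIsoQ : IsIso (j_star.map q) :=
    (Triangle.isZero₁_iff_isIso₂ _ (j_star.map_distinguished _ hQ)).1
      (isZero_j_star_i_lower i_star i_lower i_shriek j_lower j_star j_upper R a1)
  -- the total cone
  obtain ⟨E, s', t', hE⟩ := distinguished_cocone_triangle (v ≫ q)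
  obtain ⟨eE, heE⟩ := cone_iso ((Triangle.mk α β γ).rotate.rotate)
    (j_star.mapTriangle.obj (Triangle.mk (v ≫ q) s' t'))
    (rot_of_distTriang _ (rot_of_distTriang _ hC)) (j_star.map_distinguished _ hE)
    (Iso.refl _) (eY ≪≫ (@asIso _ _ _ _ (j_star.map q) (inferInstanceAs (IsIso (j_star.map q)))))
    (by exact ((Category.assoc _ _ _).symm.trans ((heY' =≫ j_star.map q).trans
        (j_star.map_comp v q).symm)).trans (Category.id_comp _).symm)
  obtain ⟨eEi, heEi⟩ := cone_iso ((i_star.mapTriangle.obj (Triangle.mk p q r)).rotate)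
    (i_star.mapTriangle.obj (Triangle.mk (v ≫ q) s' t'))
    (rot_of_distTriang _ (i_star.map_distinguished _ hQ))
    (i_star.map_distinguished _ hE)
    (asIso (i_star.map v)).symm (Iso.refl _)
    (by exact ((Category.comp_id _).trans (IsIso.inv_hom_id_assoc (i_star.map v) (i_star.map q)).symm).trans (inv (i_star.map v) ≫= (i_star.map_comp v q).symm))
  -- memberships
  have memF : Q⟦(-1:ℤ)⟧ ∈ gluedF i_shriek j_star F₁ F₂ := by
    constructor
    · refine h₁.f_mem_of_iso ((shiftFunctorCompIsoId A 1 (-1) (by ring)).symm.app f1 ≪≫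
        (shiftFunctor A (-1)).mapIso eQ ≪≫
        ((i_shriek.commShiftIso (-1:ℤ)).app Q).symm) hf1
    · refine h₂.f_mem_of_iso ((shiftFunctorCompIsoId C 1 (-1) (by ring)).symm.app F_C ≪≫
        (shiftFunctor C (-1)).mapIso (eY ≪≫ (@asIso _ _ _ _ (j_star.map q) (inferInstanceAs (IsIso (j_star.map q))))) ≪≫
        ((j_star.commShiftIso (-1:ℤ)).app Q).symm) hFC
  have memT : E⟦(-1:ℤ)⟧ ∈ gluedT i_star j_star T₁ T₂ := by
    constructor
    · refine h₁.t_mem_of_iso ((asIso (R.adj₁.counit.app a1)).symm ≪≫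
        (shiftFunctorCompIsoId A 1 (-1) (by ring)).symm.app _ ≪≫
        (shiftFunctor A (-1)).mapIso eEi ≪≫
        ((i_star.commShiftIso (-1:ℤ)).app E).symm) ha1
    · refine h₂.t_mem_of_iso ((shiftFunctorCompIsoId C 1 (-1) (by ring)).symm.app T_C ≪≫
        (shiftFunctor C (-1)).mapIso eE ≪≫
        ((j_star.commShiftIso (-1:ℤ)).app E).symm) hTC
  exact ⟨Q⟦(-1:ℤ)⟧, E⟦(-1:ℤ)⟧, memF, memT,
    ((Triangle.mk (v ≫ q) s' t').invRotate.invRotate).mor₁,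
    ((Triangle.mk (v ≫ q) s' t').invRotate.invRotate).mor₂,
    ((Triangle.mk (v ≫ q) s' t').invRotate.invRotate).mor₃,
    inv_rot_of_distTriang _ (inv_rot_of_distTriang _ hE)⟩


lemma glued_tri₂ (T₁ F₁ : Set A) (T₂ F₂ : Set C)
    (h₁ : IsBddHeredCotorsionPair A T₁ F₁) (h₂ : IsBddHeredCotorsionPair C T₂ F₂) :
    ∀ X : B, ∃ (Fx Tx : B) (_ : Fx ∈ gluedF i_shriek j_star F₁ F₂)
      (_ : Tx ∈ gluedT i_star j_star T₁ T₂) (f : X ⟶ Fx) (g : Fx ⟶ Tx)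
      (h : Tx ⟶ X⟦(1 : ℤ)⟧), Triangle.mk f g h ∈ distTriang B := by
  haveI := R.i_lower_full; haveI := R.i_lower_faithful
  haveI := R.j_lower_full; haveI := R.j_lower_faithful
  haveI := R.j_upper_full; haveI := R.j_upper_faithful
  intro X
  obtain ⟨F_C, T_C, hFC, hTC, α, β, γ, hC⟩ := h₂.tri₂ (j_star.obj X)
  set u := (R.adj₄.homEquiv X F_C) α with hu_def
  obtain ⟨Z, s, t, hZ⟩ := distinguished_cocone_triangle u
  have hα : j_star.map u ≫ R.adj₄.counit.app F_C = α := by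
    have h0 : (R.adj₄.homEquiv X F_C).symm u = α := Equiv.symm_apply_apply _ α
    rwa [Adjunction.homEquiv_counit] at h0
  obtain ⟨eZ, heZ⟩ := cone_iso (j_star.mapTriangle.obj (Triangle.mk u s t))
    (Triangle.mk α β γ) (j_star.map_distinguished _ hZ) hC
    (Iso.refl _) (@asIso _ _ _ _ (R.adj₄.counit.app F_C) (inferInstanceAs (IsIso (R.adj₄.counit.app F_C))))
    (by exact hα.trans (Category.id_comp _).symm)
  have hTY : (Triangle.mk u s t).invRotate ∈ distTriang B := inv_rot_of_distTriang _ hZ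
  -- A-side approximation of i^*(Z⟦-1⟧)
  obtain ⟨f1, t1, hf1, ht1, α₁, β₁, γ₁, hA⟩ := h₁.tri₂ (i_star.obj (Z⟦(-1:ℤ)⟧))
  set p := (R.adj₁.homEquiv (Z⟦(-1:ℤ)⟧) f1) α₁ with hp_def
  obtain ⟨Z₂, s₂, t₂, hZ₂⟩ := distinguished_cocone_triangle p
  have hTP : (Triangle.mk p s₂ t₂).invRotate ∈ distTriang B := inv_rot_of_distTriang _ hZ₂
  have hα₁ : i_star.map p ≫ R.adj₁.counit.app f1 = α₁ := by
    have h0 : (R.adj₁.homEquiv (Z⟦(-1:ℤ)⟧) f1).symm p = α₁ := Equiv.symm_apply_apply _ α₁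
    rwa [Adjunction.homEquiv_counit] at h0
  obtain ⟨ePi, hePi⟩ := cone_iso ((i_star.mapTriangle.obj ((Triangle.mk p s₂ t₂).invRotate)).rotate)
    (Triangle.mk α₁ β₁ γ₁)
    (rot_of_distTriang _ (i_star.map_distinguished _ hTP)) hA
    (Iso.refl _) (@asIso _ _ _ _ (R.adj₁.counit.app f1) (inferInstanceAs (IsIso (R.adj₁.counit.app f1))))
    (by exact hα₁.trans (Category.id_comp _).symm)
  -- isomorphisms coming from vanishing
  have hIsoY : IsIso (i_shriek.map ((Triangle.mk u s t).invRotate.mor₁)) :=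
    (Triangle.isZero₃_iff_isIso₁ _ (i_shriek.map_distinguished _ hTY)).1
      (isZero_i_shriek_j_upper i_star i_lower i_shriek j_lower j_star j_upper R F_C)
  have hIsoP : IsIso (j_star.map ((Triangle.mk p s₂ t₂).invRotate.mor₁)) :=
    (Triangle.isZero₃_iff_isIso₁ _ (j_star.map_distinguished _ hTP)).1
      (isZero_j_star_i_lower i_star i_lower i_shriek j_lower j_star j_upper R f1)
  -- the total cofiber
  obtain ⟨G, sG, tG, hG⟩ := distinguished_cocone_triangle
    ((Triangle.mk p s₂ t₂).invRotate.mor₁ ≫ (Triangle.mk u s t).invRotate.mor₁)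
  obtain ⟨eG, heG⟩ := cone_iso (i_shriek.mapTriangle.obj ((Triangle.mk p s₂ t₂).invRotate))
    (i_shriek.mapTriangle.obj (Triangle.mk
      ((Triangle.mk p s₂ t₂).invRotate.mor₁ ≫ (Triangle.mk u s t).invRotate.mor₁) sG tG))
    (i_shriek.map_distinguished _ hTP) (i_shriek.map_distinguished _ hG)
    (Iso.refl _) (@asIso _ _ _ _ (i_shriek.map ((Triangle.mk u s t).invRotate.mor₁))
        (inferInstanceAs (IsIso (i_shriek.map ((Triangle.mk u s t).invRotate.mor₁)))))
    (by exact (i_shriek.map_comp (Triangle.mk p s₂ t₂).invRotate.mor₁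
        (Triangle.mk u s t).invRotate.mor₁).symm.trans (Category.id_comp _).symm)
  obtain ⟨eGj, heGj⟩ := cone_iso (j_star.mapTriangle.obj (Triangle.mk
      ((Triangle.mk p s₂ t₂).invRotate.mor₁ ≫ (Triangle.mk u s t).invRotate.mor₁) sG tG))
    (j_star.mapTriangle.obj ((Triangle.mk u s t).invRotate))
    (j_star.map_distinguished _ hG) (j_star.map_distinguished _ hTY)
    (@asIso _ _ _ _ (j_star.map ((Triangle.mk p s₂ t₂).invRotate.mor₁))
        (inferInstanceAs (IsIso (j_star.map ((Triangle.mk p s₂ t₂).invRotate.mor₁))))) (Iso.refl _)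
    (by exact (Category.comp_id _).trans (j_star.map_comp (Triangle.mk p s₂ t₂).invRotate.mor₁
        (Triangle.mk u s t).invRotate.mor₁))
  -- memberships
  have memF : G ∈ gluedF i_shriek j_star F₁ F₂ := by
    constructor
    · exact h₁.f_mem_of_iso (asIso (R.adj₂.unit.app f1) ≪≫ eG) hf1
    · exact h₂.f_mem_of_iso ((eGj ≪≫ (@asIso _ _ _ _ (R.adj₄.counit.app F_C) (inferInstanceAs (IsIso (R.adj₄.counit.app F_C))))).symm).symm.symm hFC
  have memT : (Z₂⟦(-1:ℤ)⟧)⟦(1:ℤ)⟧ ∈ gluedT i_star j_star T₁ T₂ := by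
    constructor
    · exact h₁.t_mem_of_iso
        (ePi.symm ≪≫ ((i_star.commShiftIso (1:ℤ)).app (Z₂⟦(-1:ℤ)⟧)).symm) ht1
    · refine h₂.t_mem_of_iso (Iso.symm ?_) hTC
      exact (j_star.commShiftIso (1:ℤ)).app (Z₂⟦(-1:ℤ)⟧) ≪≫
        (shiftFunctor C (1:ℤ)).mapIso (@asIso _ _ _ _ (j_star.map ((Triangle.mk p s₂ t₂).invRotate.mor₁))
          (inferInstanceAs (IsIso (j_star.map ((Triangle.mk p s₂ t₂).invRotate.mor₁))))) ≪≫
        (shiftFunctor C (1:ℤ)).mapIso ((j_star.commShiftIso (-1:ℤ)).app Z) ≪≫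
        (shiftFunctor C (1:ℤ)).mapIso ((shiftFunctor C (-1:ℤ)).mapIso eZ) ≪≫
        (shiftFunctorCompIsoId C (-1) 1 (by ring)).app T_C
  exact ⟨G, (Z₂⟦(-1:ℤ)⟧)⟦(1:ℤ)⟧, memF, memT,
    ((Triangle.mk ((Triangle.mk p s₂ t₂).invRotate.mor₁ ≫
      (Triangle.mk u s t).invRotate.mor₁) sG tG).rotate).mor₁,
    ((Triangle.mk ((Triangle.mk p s₂ t₂).invRotate.mor₁ ≫
      (Triangle.mk u s t).invRotate.mor₁) sG tG).rotate).mor₂,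
    ((Triangle.mk ((Triangle.mk p s₂ t₂).invRotate.mor₁ ≫
      (Triangle.mk u s t).invRotate.mor₁) sG tG).rotate).mor₃,
    rot_of_distTriang _ hG⟩

end Lemmas

/-- Gluing of bounded hereditary cotorsion pairs along a recollement: if `(T₁, F₁)` and
`(T₂, F₂)` are bounded hereditary cotorsion pairs in `A` and `C` respectively, then the
glued pair `(T, F)`, with `T = {B | i^*B ∈ T₁, j^*B ∈ T₂}` and
`F = {B | i^!B ∈ F₁, j^*B ∈ F₂}`, is a bounded hereditary cotorsion pair in `B`. -/
theorem glued_cotorsion_pair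
    (R : Recollement i_star i_lower i_shriek j_lower j_star j_upper)
    (T₁ F₁ : Set A) (T₂ F₂ : Set C)
    (h₁ : IsBddHeredCotorsionPair A T₁ F₁) (h₂ : IsBddHeredCotorsionPair C T₂ F₂) :
    IsBddHeredCotorsionPair B (gluedT i_star j_star T₁ T₂) (gluedF i_shriek j_star F₁ F₂) := by
  have orth := glued_orth i_star i_lower i_shriek j_lower j_star j_upper R T₁ F₁ T₂ F₂ h₁ h₂
  have tri1 := glued_tri₁ i_star i_lower i_shriek j_lower j_star j_upper R T₁ F₁ T₂ F₂ h₁ h₂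
  have tri2 := glued_tri₂ i_star i_lower i_shriek j_lower j_star j_upper R T₁ F₁ T₂ F₂ h₁ h₂
  have tret : ∀ (X Y : B) (s : X ⟶ Y) (r : Y ⟶ X), s ≫ r = 𝟙 X →
      Y ∈ gluedT i_star j_star T₁ T₂ → X ∈ gluedT i_star j_star T₁ T₂ := by
    rintro X Y s r hsr ⟨hi, hj⟩
    exact ⟨h₁.t_mem_of_retract _ _ (i_star.map s) (i_star.map r)
        (by rw [← Functor.map_comp, hsr, CategoryTheory.Functor.map_id]) hi,
      h₂.t_mem_of_retract _ _ (j_star.map s) (j_star.map r)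
        (by rw [← Functor.map_comp, hsr, CategoryTheory.Functor.map_id]) hj⟩
  have fret : ∀ (X Y : B) (s : X ⟶ Y) (r : Y ⟶ X), s ≫ r = 𝟙 X →
      Y ∈ gluedF i_shriek j_star F₁ F₂ → X ∈ gluedF i_shriek j_star F₁ F₂ := by
    rintro X Y s r hsr ⟨hi, hj⟩
    exact ⟨h₁.f_mem_of_retract _ _ (i_shriek.map s) (i_shriek.map r)
        (by rw [← Functor.map_comp, hsr, CategoryTheory.Functor.map_id]) hi,
      h₂.f_mem_of_retract _ _ (j_star.map s) (j_star.map r)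
        (by rw [← Functor.map_comp, hsr, CategoryTheory.Functor.map_id]) hj⟩
  refine
    { t_mem_of_iso := ?_
      f_mem_of_iso := ?_
      t_mem_of_retract := tret
      f_mem_of_retract := fret
      orth := orth
      tri₁ := tri1
      tri₂ := tri2
      bounded_t := ?_
      bounded_f := ?_ }
  · rintro X Y e ⟨hi, hj⟩
    exact ⟨h₁.t_mem_of_iso (i_star.mapIso e) hi, h₂.t_mem_of_iso (j_star.mapIso e) hj⟩
  · rintro X Y e ⟨hi, hj⟩
    exact ⟨h₁.f_mem_of_iso (i_shriek.mapIso e) hi, h₂.f_mem_of_iso (j_star.mapIso e) hj⟩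
  · -- bounded_t
    apply Set.eq_univ_iff_forall.2
    intro X
    have hiX : i_star.obj X ∈ hatSet A T₁ := by rw [h₁.bounded_t]; trivial
    have hjX : j_star.obj X ∈ hatSet C T₂ := by rw [h₂.bounded_t]; trivial
    obtain ⟨m₁, hm₁⟩ := Set.mem_iUnion.1 hiX
    obtain ⟨m₂, hm₂⟩ := Set.mem_iUnion.1 hjX
    refine Set.mem_iUnion.2 ⟨max m₁ m₂, ?_⟩
    refine vanish_hat orth tri1 tret (max m₁ m₂) X ?_
    rintro Fb ⟨hFi, hFj⟩ k hk g
    obtain ⟨γ₅, h5⟩ := R.r5 X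
    have hmor1 : (R.adj₃.counit.app X) ≫ g = 0 :=
      (adj_vanish_iff R.adj₃ (j_star.obj X) Fb k).2
        (fun g' => hat_vanish h₂.orth (m₂ + 1) _ hm₂ _ hFj k
          (by push_cast at hk ⊢; omega) g') _
    obtain ⟨h', hh'⟩ := Triangle.yoneda_exact₂ _ h5 g hmor1
    have h'0 : h' = 0 :=
      (adj_vanish_iff R.adj₂ (i_star.obj X) Fb k).2
        (fun g' => hat_vanish h₁.orth (m₁ + 1) _ hm₁ _ hFi k
          (by push_cast at hk ⊢; omega) g') _
    rw [hh', h'0, comp_zero]; rfl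
  · -- bounded_f
    apply Set.eq_univ_iff_forall.2
    intro X
    have hiX : i_shriek.obj X ∈ veeSet A F₁ := by rw [h₁.bounded_f]; trivial
    have hjX : j_star.obj X ∈ veeSet C F₂ := by rw [h₂.bounded_f]; trivial
    obtain ⟨m₁, hm₁⟩ := Set.mem_iUnion.1 hiX
    obtain ⟨m₂, hm₂⟩ := Set.mem_iUnion.1 hjX
    refine Set.mem_iUnion.2 ⟨max m₁ m₂, ?_⟩
    refine vanish_vee orth tri2 fret (max m₁ m₂) X ?_
    rintro Tb ⟨hTi, hTj⟩ k hk g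
    obtain ⟨γ₄, h4⟩ := R.r4 X
    have hsh := Triangle.shift_distinguished _ h4 k
    have hmor2 : g ≫ ((Triangle.shiftFunctor B k).obj
        (Triangle.mk (R.adj₂.counit.app X) (R.adj₄.unit.app X) γ₄)).mor₂ = 0 :=
      (adj_vanish_iff R.adj₄ Tb (j_star.obj X) k).1
        (fun g' => vee_vanish h₂.orth (m₂ + 1) _ hm₂ _ hTj k
          (by push_cast at hk ⊢; omega) g') _
    obtain ⟨h', hh'⟩ := Triangle.coyoneda_exact₂ _ hsh g hmor2
    have h'0 : h' = 0 :=
      (adj_vanish_iff R.adj₁ Tb (i_shriek.obj X) k).1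
        (fun g' => vee_vanish h₁.orth (m₁ + 1) _ hm₁ _ hTi k
          (by push_cast at hk ⊢; omega) g') _
    rw [hh', h'0, zero_comp]; rfl

end Recollement

end Paper
end

section
/- Let (A, B, C, i^*, i_*, i^!, j_!, j^*, j_*) be a recollement of triangulated categories, and let (T_1, F_1) and (T_2, F_2) be full subcategory pairs of A and C with Hom_A(T_1, F_1[k]) = 0 and Hom_C(T_2, F_2[k]) = 0 for all k ≥ 1. Define T = {B ∈ B : i^*B ∈ T_1 and j^*B ∈ T_2} and F = {B ∈ B : i^!B ∈ F_1 and j^*B ∈ F_2}. Then Hom_B(T, F[k]) = 0 for all T ∈ T, F ∈ F and all integers k ≥ 1. -/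
open CategoryTheory Limits Pretriangulated

namespace Paper

section Recollement

variable {A : Type*} [Category A] [HasZeroObject A] [Preadditive A] [HasShift A ℤ]
  [∀ n : ℤ, (shiftFunctor A n).Additive] [Pretriangulated A]
variable {B : Type*} [Category B] [HasZeroObject B] [Preadditive B] [HasShift B ℤ]
  [∀ n : ℤ, (shiftFunctor B n).Additive] [Pretriangulated B]
variable {C : Type*} [Category C] [HasZeroObject C] [Preadditive C] [HasShift C ℤ]
  [∀ n : ℤ, (shiftFunctor C n).Additive] [Pretriangulated C]

variable (i_star : B ⥤ A) (i_lower : A ⥤ B) (i_shriek : B ⥤ A)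
  (j_lower : C ⥤ B) (j_star : B ⥤ C) (j_upper : C ⥤ B)
  [Functor.CommShift i_star ℤ] [Functor.IsTriangulated i_star]
  [Functor.CommShift i_lower ℤ] [Functor.IsTriangulated i_lower]
  [Functor.CommShift i_shriek ℤ] [Functor.IsTriangulated i_shriek]
  [Functor.CommShift j_lower ℤ] [Functor.IsTriangulated j_lower]
  [Functor.CommShift j_star ℤ] [Functor.IsTriangulated j_star]
  [Functor.CommShift j_upper ℤ] [Functor.IsTriangulated j_upper]

/-- If `Hom_A(T₁, F₁[k]) = 0` and `Hom_C(T₂, F₂[k]) = 0` for all `k ≥ 1`, then the glued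
subcategories `T = {B | i^*B ∈ T₁, j^*B ∈ T₂}` and `F = {B | i^!B ∈ F₁, j^*B ∈ F₂}`
satisfy `Hom_B(T, F[k]) = 0` for all `T ∈ T`, `F ∈ F` and all `k ≥ 1`. -/
theorem glued_orthogonality
    (R : Recollement i_star i_lower i_shriek j_lower j_star j_upper)
    (T₁ F₁ : Set A) (T₂ F₂ : Set C)
    (h₁ : ∀ X ∈ T₁, ∀ Y ∈ F₁, ∀ k : ℤ, 1 ≤ k → ∀ f : X ⟶ Y⟦k⟧, f = 0)
    (h₂ : ∀ X ∈ T₂, ∀ Y ∈ F₂, ∀ k : ℤ, 1 ≤ k → ∀ f : X ⟶ Y⟦k⟧, f = 0) :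
    ∀ X ∈ gluedT i_star j_star T₁ T₂, ∀ Y ∈ gluedF i_shriek j_star F₁ F₂,
      ∀ k : ℤ, 1 ≤ k → ∀ f : X ⟶ Y⟦k⟧, f = 0 := by
  intro X hX Y hY k hk f
  obtain ⟨γ, hT⟩ := R.r4 Y
  have hT' := Pretriangulated.Triangle.shift_distinguished _ hT k
  -- any morphism `X ⟶ (j_* j^* Y)⟦k⟧` vanishes
  have hzero₂ : ∀ u : X ⟶ (j_upper.obj (j_star.obj Y))⟦k⟧, u = 0 := by
    intro u
    have h0 : (R.adj₄.homEquiv X ((j_star.obj Y)⟦k⟧)).symm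
        (u ≫ (j_upper.commShiftIso k).inv.app (j_star.obj Y)) = 0 :=
      h₂ _ hX.2 _ hY.2 k hk _
    have hsymm0 : (R.adj₄.homEquiv X ((j_star.obj Y)⟦k⟧)).symm 0 = 0 := by
      rw [Adjunction.homEquiv_counit]; simp
    have h1 : u ≫ (j_upper.commShiftIso k).inv.app (j_star.obj Y) = 0 :=
      (R.adj₄.homEquiv _ _).symm.injective (h0.trans hsymm0.symm)
    calc u = (u ≫ (j_upper.commShiftIso k).inv.app (j_star.obj Y)) ≫
              (j_upper.commShiftIso k).hom.app (j_star.obj Y) := by simp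
    _ = 0 := by rw [h1, zero_comp]
  -- any morphism `X ⟶ (i_* i^! Y)⟦k⟧` vanishes
  have hzero₁ : ∀ u : X ⟶ (i_lower.obj (i_shriek.obj Y))⟦k⟧, u = 0 := by
    intro u
    have h0 : (R.adj₁.homEquiv X ((i_shriek.obj Y)⟦k⟧)).symm
        (u ≫ (i_lower.commShiftIso k).inv.app (i_shriek.obj Y)) = 0 :=
      h₁ _ hX.1 _ hY.1 k hk _
    have hsymm0 : (R.adj₁.homEquiv X ((i_shriek.obj Y)⟦k⟧)).symm 0 = 0 := by
      rw [Adjunction.homEquiv_counit]; simp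
    have h1 : u ≫ (i_lower.commShiftIso k).inv.app (i_shriek.obj Y) = 0 :=
      (R.adj₁.homEquiv _ _).symm.injective (h0.trans hsymm0.symm)
    calc u = (u ≫ (i_lower.commShiftIso k).inv.app (i_shriek.obj Y)) ≫
              (i_lower.commShiftIso k).hom.app (i_shriek.obj Y) := by simp
    _ = 0 := by rw [h1, zero_comp]
  obtain ⟨g, hg⟩ := Pretriangulated.Triangle.coyoneda_exact₂ _ hT' f (hzero₂ _)
  rw [hg, hzero₁ g]; exact zero_comp

end Recollement

end Paper
end
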